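/- Suppose sprank(A^S) = n. Let OPT ⊆ {1,…,m} be a subset of maximum cardinality such that ν(S_OPT) = n−1 (i.e., the induced bipartite graph on the rows OPT has a maximum matching of size n−1). Then spcospark(A^S) = m − |OPT|. -/

import Mathlib

/-!
If the rows `OPT` carry no matching of all `n` columns, every `n × n` minor of these rows of a
matrix `A` with pattern `S` vanishes, since each term of its Leibniz expansion is a product along
such a matching. So these rows have a common nonzero kernel vector `x`, and
`‖A x‖₀ ≤ m - |OPT|`.

Conversely, choose `A` with pattern `S` at a point where neither any entry of the generic matrix
nor any of its nonzero transversal minors vanishes. Then every row set carrying a matching of all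
columns determines `x`, so for `x ≠ 0` the zero set `Z` of `A x` has `ν(S_Z) ≤ n - 1`. Adding a
row raises `ν` by at most one and `ν(S) ≥ ν(S_OPT) = n - 1`, so `Z` extends to a row set with
`ν = n - 1`, whence `|Z| ≤ |OPT|` by maximality and `‖A x‖₀ ≥ m - |OPT|`.
-/

open Matrix MeasureTheory

/-- `A` has sparsity pattern `S`: the nonzero entries of `A` are exactly those indexed by `S`. -/
def HasPattern {m n : ℕ} (S : Finset (Fin m × Fin n)) (A : Matrix (Fin m) (Fin n) ℝ) : Prop :=
  ∀ i j, A i j ≠ 0 ↔ (i, j) ∈ S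

/-- Generic rank of the class of matrices with sparsity pattern `S`. -/
noncomputable def sprank {m n : ℕ} (S : Finset (Fin m × Fin n)) : ℕ :=
  sSup {r : ℕ | ∃ A : Matrix (Fin m) (Fin n) ℝ, HasPattern S A ∧ A.rank = r}

/-- The sparsity pattern restricted to the rows in `T` (rows outside `T` become zero). -/
def patternOn {m n : ℕ} (S : Finset (Fin m × Fin n)) (T : Finset (Fin m)) :
    Finset (Fin m × Fin n) :=
  S.filter (fun p => p.1 ∈ T)

/-- A matching of a sparsity pattern: any two distinct pairs differ in both coordinates. -/
def IsMatching {m n : ℕ} (M : Finset (Fin m × Fin n)) : Prop :=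
  ∀ p ∈ M, ∀ q ∈ M, p ≠ q → p.1 ≠ q.1 ∧ p.2 ≠ q.2

/-- `nu S` : maximum cardinality of a matching contained in `S`. -/
noncomputable def nu {m n : ℕ} (S : Finset (Fin m × Fin n)) : ℕ :=
  sSup {k : ℕ | ∃ M ⊆ S, IsMatching M ∧ M.card = k}

/-- ℓ₀ "norm": number of nonzero entries of a vector. -/
noncomputable def l0 {m : ℕ} (y : Fin m → ℝ) : ℕ :=
  (Finset.univ.filter (fun i => y i ≠ 0)).card

/-- `cospark A` : minimum of `‖A x‖₀` over nonzero `x`. -/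
noncomputable def cospark {m n : ℕ} (A : Matrix (Fin m) (Fin n) ℝ) : ℕ :=
  sInf {k : ℕ | ∃ x : Fin n → ℝ, x ≠ 0 ∧ l0 (A.mulVec x) = k}

/-- Generic cospark of the class of matrices with sparsity pattern `S`. -/
noncomputable def spcospark {m n : ℕ} (S : Finset (Fin m × Fin n)) : ℕ :=
  sSup {k : ℕ | ∃ A : Matrix (Fin m) (Fin n) ℝ, HasPattern S A ∧ cospark A = k}

/-- The row-submatrix `A_T`, realized as `A` with the rows outside `T` zeroed out. -/
noncomputable def rowRestrict {m n : ℕ} (A : Matrix (Fin m) (Fin n) ℝ) (T : Finset (Fin m)) :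
    Matrix (Fin m) (Fin n) ℝ :=
  Matrix.of fun i j => if i ∈ T then A i j else 0

/-- `X_W` : the rows of the pattern `S` all of whose nonzero positions lie in the columns `W`. -/
def rowsIn {m n : ℕ} (S : Finset (Fin m × Fin n)) (W : Finset (Fin n)) : Finset (Fin m) :=
  Finset.univ.filter (fun i => ∀ j, (i, j) ∈ S → j ∈ W)

open Finset

section Matchings

variable {m n : ℕ}

lemma IsMatching.mono {M M' : Finset (Fin m × Fin n)} (hM : IsMatching M) (h : M' ⊆ M) :
    IsMatching M' :=
  fun p hp q hq hpq => hM p (h hp) q (h hq) hpq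

lemma bddAbove_matching_card (S : Finset (Fin m × Fin n)) :
    BddAbove {k : ℕ | ∃ M ⊆ S, IsMatching M ∧ M.card = k} :=
  ⟨S.card, by rintro _ ⟨M, hMS, -, rfl⟩; exact card_le_card hMS⟩

lemma exists_isMatching_card_eq_nu (S : Finset (Fin m × Fin n)) :
    ∃ M ⊆ S, IsMatching M ∧ M.card = nu S := by
  refine Nat.sSup_mem ?_ (bddAbove_matching_card S)
  exact ⟨0, ∅, empty_subset S, by simp [IsMatching], card_empty⟩

lemma IsMatching.card_le_nu {S M : Finset (Fin m × Fin n)} (hM : IsMatching M) (hMS : M ⊆ S) :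
    M.card ≤ nu S :=
  le_csSup (bddAbove_matching_card S) ⟨M, hMS, hM, rfl⟩

lemma nu_mono {S S' : Finset (Fin m × Fin n)} (h : S ⊆ S') : nu S ≤ nu S' := by
  obtain ⟨M, hMS, hM, hcard⟩ := exists_isMatching_card_eq_nu S
  exact hcard ▸ hM.card_le_nu (hMS.trans h)

lemma patternOn_mono (S : Finset (Fin m × Fin n)) {T T' : Finset (Fin m)} (h : T ⊆ T') :
    patternOn S T ⊆ patternOn S T' :=
  fun _ hp => mem_filter.2 ⟨(mem_filter.1 hp).1, h (mem_filter.1 hp).2⟩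

lemma le_nu_iff_exists_injective {S : Finset (Fin m × Fin n)} :
    n ≤ nu S ↔ ∃ r : Fin n → Fin m, Function.Injective r ∧ ∀ k, (r k, k) ∈ S := by
  constructor
  · intro hn
    obtain ⟨M, hMS, hM, hcard⟩ := exists_isMatching_card_eq_nu S
    have hcols : M.image Prod.snd = univ := by
      refine eq_of_subset_of_card_le (subset_univ _) ?_
      rw [card_image_of_injOn fun p hp q hq hpq => by_contra fun hne => (hM p hp q hq hne).2 hpq,
        card_univ, Fintype.card_fin]
      omega
    have hex : ∀ k, ∃ p ∈ M, p.2 = k := fun k => mem_image.1 (hcols ▸ mem_univ k)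
    choose p hpM hpk using hex
    refine ⟨fun k => (p k).1, fun k k' hkk' => ?_, fun k => ?_⟩
    · have hpp : p k = p k' := by_contra fun hne => (hM _ (hpM k) _ (hpM k') hne).1 hkk'
      rw [← hpk k, ← hpk k', hpp]
    · have hpS : ((p k).1, (p k).2) ∈ S := hMS (hpM k)
      rwa [hpk k] at hpS
  · rintro ⟨r, hr, hrS⟩
    have hinj : Function.Injective fun k => (r k, k) := fun k k' h => congrArg Prod.snd h
    have hM : IsMatching (univ.image fun k => (r k, k)) := by
      simp only [IsMatching, mem_image, mem_univ, true_and]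
      rintro _ ⟨k, rfl⟩ _ ⟨k', rfl⟩ hne
      have hkk' : k ≠ k' := fun h => hne (h ▸ rfl)
      exact ⟨hr.ne hkk', hkk'⟩
    calc n = (univ.image fun k => (r k, k)).card := by
          rw [card_image_of_injective _ hinj, card_univ, Fintype.card_fin]
      _ ≤ nu S := hM.card_le_nu (by simpa [subset_iff] using hrS)

lemma nu_patternOn_insert_le (S : Finset (Fin m × Fin n)) (T : Finset (Fin m)) (a : Fin m) :
    nu (patternOn S (insert a T)) ≤ nu (patternOn S T) + 1 := by
  obtain ⟨M, hMS, hM, hcard⟩ := exists_isMatching_card_eq_nu (patternOn S (insert a T))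
  have hrow : (M.filter fun p => p.1 = a).card ≤ 1 :=
    card_le_one.2 fun p hp q hq => by_contra fun hne =>
      (hM p (mem_filter.1 hp).1 q (mem_filter.1 hq).1 hne).1
        ((mem_filter.1 hp).2.trans (mem_filter.1 hq).2.symm)
  have hrest : M.filter (fun p => ¬p.1 = a) ⊆ patternOn S T := by
    intro p hp
    obtain ⟨hpM, hpa⟩ := mem_filter.1 hp
    obtain ⟨hpS, hpT⟩ := mem_filter.1 (hMS hpM)
    exact mem_filter.2 ⟨hpS, (mem_insert.1 hpT).resolve_left hpa⟩
  have hsplit := card_filter_add_card_filter_not (s := M) fun p => p.1 = a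
  have := (hM.mono (filter_subset _ M)).card_le_nu hrest
  omega

end Matchings

lemma exists_superset_eq_of_insert_le_succ {α : Type*} [DecidableEq α] (f : Finset α → ℕ)
    (hf : ∀ T a, f (insert a T) ≤ f T + 1) {Z : Finset α} {k : ℕ} (hZ : f Z ≤ k)
    (D : Finset α) (hD : k ≤ f (Z ∪ D)) : ∃ T, Z ⊆ T ∧ f T = k := by
  induction D using Finset.induction_on with
  | empty => exact ⟨Z, subset_rfl, le_antisymm hZ (by simpa using hD)⟩
  | insert a D _ ih =>
    by_cases hk : k ≤ f (Z ∪ D)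
    · exact ih hk
    · rw [union_insert] at hD
      exact ⟨insert a (Z ∪ D), subset_union_left.trans (subset_insert a _),
        le_antisymm (by have := hf (Z ∪ D) a; omega) hD⟩

lemma Matrix.exists_perm_apply_ne_zero_of_det_ne_zero {R : Type*} [CommRing R] [IsDomain R]
    {n : Type*} [Fintype n] [DecidableEq n] {B : Matrix n n R} (h : B.det ≠ 0) :
    ∃ σ : Equiv.Perm n, ∀ i, B (σ i) i ≠ 0 := by
  obtain ⟨σ, -, hσ⟩ := exists_ne_zero_of_sum_ne_zero (B.det_apply ▸ h)
  exact ⟨σ, fun i => prod_ne_zero_iff.1 (right_ne_zero_of_smul hσ) i (mem_univ i)⟩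

lemma Matrix.exists_injective_det_submatrix_ne_zero {K : Type*} [Field K] {m n : ℕ}
    (A : Matrix (Fin m) (Fin n) K) (hA : Function.Injective A.mulVec) :
    ∃ r : Fin n → Fin m, Function.Injective r ∧ (A.submatrix r id).det ≠ 0 := by
  obtain ⟨κ, a, ha, hspan, hli⟩ := exists_linearIndependent'.{0} K A.row
  have : Fintype κ := @Fintype.ofFinite κ hli.finite
  have hcard : Fintype.card κ = n := by
    rw [linearIndependent_iff_card_eq_finrank_span.1 hli, Set.finrank, hspan,
      ← rank_eq_finrank_span_row, Matrix.rank, LinearMap.finrank_range_of_inj hA,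
      Module.finrank_fin_fun]
  set e := (Fintype.equivFinOfCardEq hcard).symm
  refine ⟨a ∘ e, ha.comp e.injective, ?_⟩
  have hunit : IsUnit (A.submatrix (a ∘ e) id) :=
    Matrix.linearIndependent_rows_iff_isUnit.1 (hli.comp e e.injective)
  exact ((Matrix.isUnit_iff_isUnit_det _).1 hunit).ne_zero

lemma le_nu_of_injective_mulVec {K : Type*} [Field K] {m n : ℕ} {S : Finset (Fin m × Fin n)}
    {B : Matrix (Fin m) (Fin n) K} (hB : ∀ i j, B i j ≠ 0 → (i, j) ∈ S)
    (hinj : Function.Injective B.mulVec) : n ≤ nu S := by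
  obtain ⟨r, hr, hdet⟩ := B.exists_injective_det_submatrix_ne_zero hinj
  obtain ⟨σ, hσ⟩ := Matrix.exists_perm_apply_ne_zero_of_det_ne_zero hdet
  exact le_nu_iff_exists_injective.2 ⟨r ∘ σ, hr.comp σ.injective, fun k => hB _ _ (hσ k)⟩

section Generic

variable {m n : ℕ}

open MvPolynomial

noncomputable def genericMatrix (R : Type*) [CommRing R] (S : Finset (Fin m × Fin n)) :
    Matrix (Fin m) (Fin n) (MvPolynomial (Fin m × Fin n) R) :=
  Matrix.of fun i j => if (i, j) ∈ S then X (i, j) else 0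

/-- Specializing the variables on the chosen transversal `{(r k, k)}` to `1` and all others to `0`
turns the minor into the identity matrix. -/
lemma det_genericMatrix_submatrix_ne_zero {R : Type*} [CommRing R] [Nontrivial R]
    {S : Finset (Fin m × Fin n)} {r : Fin n → Fin m} (hr : Function.Injective r)
    (hrS : ∀ k, (r k, k) ∈ S) : ((genericMatrix R S).submatrix r id).det ≠ 0 := by
  classical
  set v : Fin m × Fin n → R := fun p => if p.1 = r p.2 then 1 else 0
  have hv : ((genericMatrix R S).submatrix r id).map (eval v) = 1 := by
    ext k l
    by_cases hkl : k = l
    · subst hkl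
      simp [genericMatrix, v, hrS k]
    · have hrkl : r k ≠ r l := hr.ne hkl
      simp [genericMatrix, v, hrkl, Matrix.one_apply_ne hkl, apply_ite (eval v)]
  intro h
  have := congrArg (eval v) h
  rw [RingHom.map_det, RingHom.mapMatrix_apply, hv, Matrix.det_one, map_zero] at this
  exact one_ne_zero this

lemma exists_hasPattern_det_submatrix_ne_zero (S : Finset (Fin m × Fin n)) :
    ∃ A : Matrix (Fin m) (Fin n) ℝ, HasPattern S A ∧
      ∀ r : Fin n → Fin m, Function.Injective r → (∀ k, (r k, k) ∈ S) →
        (A.submatrix r id).det ≠ 0 := by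
  classical
  set transversals := univ.filter fun r : Fin n → Fin m =>
    Function.Injective r ∧ ∀ k, (r k, k) ∈ S
  set P : MvPolynomial (Fin m × Fin n) ℝ :=
    (∏ p ∈ S, X p) * ∏ r ∈ transversals, ((genericMatrix ℝ S).submatrix r id).det
  have hP : P ≠ 0 := mul_ne_zero (prod_ne_zero_iff.2 fun p _ => X_ne_zero p)
    (prod_ne_zero_iff.2 fun r hr =>
      det_genericMatrix_submatrix_ne_zero (mem_filter.1 hr).2.1 (mem_filter.1 hr).2.2)
  obtain ⟨v, hv⟩ : ∃ v, eval v P ≠ 0 := by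
    by_contra! h
    exact hP (MvPolynomial.funext fun v => by simp [h v])
  rw [map_mul, map_prod, map_prod, mul_ne_zero_iff, prod_ne_zero_iff, prod_ne_zero_iff] at hv
  refine ⟨(genericMatrix ℝ S).map (eval v), fun i j => ?_, fun r hr hrS => ?_⟩
  · by_cases hij : (i, j) ∈ S
    · simpa [genericMatrix, hij] using hv.1 (i, j) hij
    · simp [genericMatrix, hij]
  · rw [Matrix.submatrix_map, ← RingHom.mapMatrix_apply, ← RingHom.map_det]
    exact hv.2 r (mem_filter.2 ⟨mem_univ r, hr, hrS⟩)

end Generic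

section Cospark

variable {m n : ℕ}

lemma rowRestrict_mulVec_apply (A : Matrix (Fin m) (Fin n) ℝ) (T : Finset (Fin m))
    (x : Fin n → ℝ) (i : Fin m) :
    (rowRestrict A T *ᵥ x) i = if i ∈ T then (A *ᵥ x) i else 0 := by
  split_ifs with hi <;> simp [rowRestrict, mulVec, dotProduct, hi]

lemma HasPattern.mem_patternOn_of_rowRestrict_ne_zero {S : Finset (Fin m × Fin n)}
    {A : Matrix (Fin m) (Fin n) ℝ} (hA : HasPattern S A) {T : Finset (Fin m)} {i : Fin m}
    {j : Fin n} (h : rowRestrict A T i j ≠ 0) : (i, j) ∈ patternOn S T := by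
  simp only [rowRestrict, Matrix.of_apply, ne_eq, ite_eq_right_iff, not_forall] at h
  obtain ⟨hi, hij⟩ := h
  exact mem_filter.2 ⟨(hA i j).1 hij, hi⟩

lemma l0_add_card_zeros (y : Fin m → ℝ) : l0 y + (univ.filter fun i => y i = 0).card = m := by
  rw [l0, add_comm, card_filter_add_card_filter_not, card_univ, Fintype.card_fin]

lemma cospark_le_of_nu_patternOn_lt {S : Finset (Fin m × Fin n)} {A : Matrix (Fin m) (Fin n) ℝ}
    (hA : HasPattern S A) {T : Finset (Fin m)} (hT : nu (patternOn S T) < n) :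
    cospark A ≤ m - T.card := by
  have hnotinj : ¬Function.Injective (rowRestrict A T).mulVec := fun hinj =>
    hT.not_ge (le_nu_of_injective_mulVec (fun _ _ => hA.mem_patternOn_of_rowRestrict_ne_zero) hinj)
  obtain ⟨x, y, hxy, hne⟩ := Function.not_injective_iff.1 hnotinj
  have hzero : ∀ i ∈ T, (A *ᵥ (x - y)) i = 0 := fun i hi => by
    simpa [mulVec_sub, rowRestrict_mulVec_apply, hi, sub_eq_zero] using congrFun hxy i
  calc cospark A ≤ l0 (A *ᵥ (x - y)) := Nat.sInf_le ⟨x - y, sub_ne_zero.2 hne, rfl⟩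
    _ ≤ (univ \ T).card := card_le_card fun i hi =>
        mem_sdiff.2 ⟨mem_univ i, fun hiT => (mem_filter.1 hi).2 (hzero i hiT)⟩
    _ = m - T.card := by rw [card_sdiff_of_subset (subset_univ T), card_univ, Fintype.card_fin]

lemma le_cospark_of_det_submatrix_ne_zero (hn : 1 ≤ n) {S : Finset (Fin m × Fin n)}
    {A : Matrix (Fin m) (Fin n) ℝ}
    (hA : ∀ r : Fin n → Fin m, Function.Injective r → (∀ k, (r k, k) ∈ S) →
      (A.submatrix r id).det ≠ 0)
    {OPT : Finset (Fin m)} (hOPT : nu (patternOn S OPT) = n - 1)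
    (hmax : ∀ T : Finset (Fin m), nu (patternOn S T) = n - 1 → T.card ≤ OPT.card) :
    m - OPT.card ≤ cospark A := by
  refine le_csInf ⟨_, fun _ => 1, fun h => by simpa using congrFun h ⟨0, hn⟩, rfl⟩ ?_
  rintro _ ⟨x, hx, rfl⟩
  set Z := univ.filter fun i => (A *ᵥ x) i = 0
  have hZ : nu (patternOn S Z) ≤ n - 1 := by
    by_contra! h
    obtain ⟨r, hr, hrS⟩ := le_nu_iff_exists_injective.1 (show n ≤ nu (patternOn S Z) by omega)
    refine hx (Matrix.eq_zero_of_mulVec_eq_zero (hA r hr fun k => (mem_filter.1 (hrS k)).1) ?_)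
    funext k
    simpa [mulVec, dotProduct] using (mem_filter.1 (mem_filter.1 (hrS k)).2).2
  have huniv : n - 1 ≤ nu (patternOn S (Z ∪ univ)) :=
    hOPT ▸ nu_mono (patternOn_mono S ((subset_univ OPT).trans subset_union_right))
  obtain ⟨T, hZT, hT⟩ := exists_superset_eq_of_insert_le_succ (fun T => nu (patternOn S T))
    (nu_patternOn_insert_le S) hZ univ huniv
  have hZOPT := (card_le_card hZT).trans (hmax T hT)
  have hl0 : l0 (A *ᵥ x) + Z.card = m := l0_add_card_zeros _
  omega

end Cospark

theorem stmt5_general {m n : ℕ} (hn : 1 ≤ n) (S : Finset (Fin m × Fin n))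
    (OPT : Finset (Fin m))
    (hOPT : nu (patternOn S OPT) = n - 1)
    (hmax : ∀ T : Finset (Fin m), nu (patternOn S T) = n - 1 → T.card ≤ OPT.card) :
    spcospark S = m - OPT.card := by
  have hupper : ∀ A, HasPattern S A → cospark A ≤ m - OPT.card :=
    fun A hA => cospark_le_of_nu_patternOn_lt hA (by omega)
  obtain ⟨A, hA, hgeneric⟩ := exists_hasPattern_det_submatrix_ne_zero S
  refine IsGreatest.csSup_eq ⟨⟨A, hA, le_antisymm (hupper A hA) ?_⟩, ?_⟩
  · exact le_cospark_of_det_submatrix_ne_zero hn hgeneric hOPT hmax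
  · rintro _ ⟨A', hA', rfl⟩
    exact hupper A' hA'

/-- if `sprank S = n` and `OPT` is a set of rows of maximum cardinality with
`ν(S_OPT) = n - 1`, then `spcospark S = m - |OPT|`. -/
theorem stmt5 {m n : ℕ} (hn : 1 ≤ n) (hmn : n < m) (S : Finset (Fin m × Fin n))
    (hspr : sprank S = n) (OPT : Finset (Fin m))
    (hOPT : nu (patternOn S OPT) = n - 1)
    (hmax : ∀ T : Finset (Fin m), nu (patternOn S T) = n - 1 → T.card ≤ OPT.card) :
    spcospark S = m - OPT.card :=
  stmt5_general hn S OPT hOPT hmax
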